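/- arXiv:1410.3144 — 3 statements merged into one kernel-verified Lean document; each statement's English description precedes it below -/
import Mathlib

section
/- Let M be a dense C-minimal C-structure such that bn(a) ≥ ℵ₀ for every a ∈ T and every branch Br(α) is densely ordered. Let A ⊆ T be an infinite antichain and let {Γ_i : i < κ} be an infinite family of pairwise distinct cones, each with basis in A, such that some positive integer N bounds the number of cones in the family with any given basis. Then for every definable subset D ⊆ M, only finitely many of the cones Γ_i intersect both D and M ∖ D. -/
namespace CMinPaper

open FirstOrder Language Structure Set

universe u v w

/-! ### The language with a single ternary relation symbol `C` -/

/-- The first-order language whose only symbol is one ternary relation symbol. -/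
def cLang : FirstOrder.Language :=
  { Functions := fun _ => Empty
    Relations := fun n => PLift (n = 3) }

/-- The `cLang`-structure on a set determined by a ternary relation. -/
def cStructure {N : Type w} (R : N → N → N → Prop) : cLang.Structure N where
  funMap := fun f _ => f.elim
  RelMap := fun {n} r v =>
    match n, r, v with
    | _, ⟨rfl⟩, v => R (v 0) (v 1) (v 2)

/-! ### C-sets -/

/-- The axioms (C1)-(C4) of a `C`-set. -/
structure IsCSet {M : Type u} (C : M → M → M → Prop) : Prop where
  c1 : ∀ x y z, C x y z → C x z y
  c2 : ∀ x y z, C x y z → ¬ C y x z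
  c3 : ∀ x y z w, C x y z → C w y z ∨ C x w z
  c4 : ∀ x y, x ≠ y → C x y y

/-- A dense `C`-set: a `C`-set with at least two elements satisfying axiom (D). -/
structure IsDenseCSet {M : Type u} (C : M → M → M → Prop) extends IsCSet C : Prop where
  nontrivial : ∃ x y : M, x ≠ y
  denseAx : ∀ x y : M, x ≠ y → ∃ z, z ≠ y ∧ C x y z

variable {M : Type u}

/-! ### The canonical tree -/

/-- The set `Λ(α,β) = {x | ¬ C(x,α,β)}`. -/
def lamSet (C : M → M → M → Prop) (α β : M) : Set M := {x : M | ¬ C x α β}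

/-- The canonical tree `T(M)` of a `C`-set: the collection of all sets `Λ(α,β)`,
ordered by reverse inclusion. -/
def Node (C : M → M → M → Prop) : Type u := {s : Set M // ∃ α β : M, s = lamSet C α β}

instance {C : M → M → M → Prop} : PartialOrder (Node C) where
  le a b := b.1 ⊆ a.1
  le_refl a := subset_rfl
  le_trans a b c h1 h2 := Set.Subset.trans h2 h1
  le_antisymm a b h1 h2 := Subtype.ext (Set.Subset.antisymm h2 h1)

/-- The node `inf(α,β) = Λ(α,β)` of the canonical tree, coded by the pair `(α,β)`. -/
def node (C : M → M → M → Prop) (α β : M) : Node C := ⟨lamSet C α β, α, β, rfl⟩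

/-- The leaf `Λ(α,α) = {α}` of the canonical tree corresponding to `α ∈ M`. -/
def leafN (C : M → M → M → Prop) (α : M) : Node C := node C α α

/-- A node of the canonical tree is a leaf when it is a singleton. The set `T` of the
paper is the set of nodes which are not leaves. -/
def IsLeaf (C : M → M → M → Prop) (a : Node C) : Prop := ∃ α : M, a.1 = {α}

/-- The branch `Br(α) = {a ∈ T(M) : a ≤ α}` of a point `α ∈ M`. -/
def Br (C : M → M → M → Prop) (α : M) : Set (Node C) := {a : Node C | a ≤ leafN C α}

/-- `IsInfN C a b m` says that `m` is the infimum of the nodes `a` and `b` in `T(M)`. -/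
def IsInfN (C : M → M → M → Prop) (a b m : Node C) : Prop :=
  m ≤ a ∧ m ≤ b ∧ ∀ d : Node C, d ≤ a → d ≤ b → d ≤ m

/-! ### Cones, 0-level sets, intervals, n-level sets -/

/-- The cone `Γ_a(α) = {β ∈ M : a < inf(α,β)}` of `α` at `a`, as a subset of `M`. -/
def coneSet (C : M → M → M → Prop) (a : Node C) (α : M) : Set M :=
  {β : M | a < node C α β}

/-- `s` is a cone at the node `a`. -/
def IsConeAt (C : M → M → M → Prop) (a : Node C) (s : Set M) : Prop :=
  ∃ α : M, a < leafN C α ∧ s = coneSet C a α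

/-- `s` is a cone (including `M` itself, the cone at `-∞`). -/
def IsCone (C : M → M → M → Prop) (s : Set M) : Prop :=
  s = Set.univ ∨ ∃ a : Node C, IsConeAt C a s

/-- The 0-level set `Λ_a`, viewed as a subset of `M`. -/
def lamM (C : M → M → M → Prop) (a : Node C) : Set M := {β : M | a ≤ leafN C β}

/-- `Λ_a(α)`: the 0-level set at `a` with the cone of `α` at `a` removed, in `M`. -/
def lamMinus (C : M → M → M → Prop) (a : Node C) (α : M) : Set M :=
  lamM C a \ coneSet C a α

/-- The cone `Γ_a(b)` of a node `b` at `a`, as a set of leaves: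
`{β ∈ M : a < inf(b, β)}`. -/
def coneSetN (C : M → M → M → Prop) (a b : Node C) : Set M :=
  {β : M | ∃ m : Node C, IsInfN C b (leafN C β) m ∧ a < m}

/-- The interval `(a,b) = Γ_a(b) ∖ Λ_b` in `M`, where `a ∈ T(M) ∪ {-∞}`
(`a = none` is `-∞`). -/
def intervalM (C : M → M → M → Prop) (a : Option (Node C)) (b : Node C) : Set M :=
  (match a with
    | none => Set.univ
    | some a' => coneSetN C a' b) \ lamM C b

/-- An `n`-level set at `a`: `Λ_a` with `n` pairwise distinct cones at `a` removed. -/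
def IsNLevelSet (C : M → M → M → Prop) (n : ℕ) (s : Set M) : Prop :=
  ∃ (a : Node C) (γ : Fin n → Set M), Function.Injective γ ∧
    (∀ i, IsConeAt C a (γ i)) ∧ s = lamM C a \ ⋃ i, γ i

/-! ### 1-cells of `M` -/

/-- The possible types of pieces of a 1-cell. -/
inductive PieceType where
  | point : PieceType
  | cone : PieceType
  | interval : PieceType
  | level : ℕ → PieceType

/-- `s` is a piece of the given type. -/
def IsPiece (C : M → M → M → Prop) : PieceType → Set M → Prop
  | PieceType.point, s => ∃ α : M, s = {α}
  | PieceType.cone, s => IsCone C s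
  | PieceType.interval, s => (∃ b : Node C, s = intervalM C none b) ∨
      (∃ a b : Node C, a < b ∧ s = intervalM C (some a) b)
  | PieceType.level n, s => IsNLevelSet C n s

/-- A 1-cell: a definable subset of `M` which is a finite union of pieces of one single
type among singletons, cones, intervals and `n`-level sets. Here `defin` is the ambient
notion of definable subset of `M`. -/
def IsCell1 (C : M → M → M → Prop) (defin : Set M → Prop) (s : Set M) : Prop :=
  defin s ∧ ∃ (t : PieceType) (k : ℕ) (p : Fin k → Set M),
    (∀ i, IsPiece C t (p i)) ∧ s = ⋃ i, p i

/-! ### Ambient hypotheses on the canonical tree -/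

/-- `bn(a) ≥ ℵ₀` for every `a ∈ T`: every non-leaf node has infinitely many cones. -/
def BranchesInfinite (C : M → M → M → Prop) : Prop :=
  ∀ a : Node C, ¬ IsLeaf C a → {s : Set M | IsConeAt C a s}.Infinite

/-- Every branch `Br(α)` is densely ordered. -/
def BranchesDense (C : M → M → M → Prop) : Prop :=
  ∀ (α : M) (a b : Node C), a ≤ leafN C α → b ≤ leafN C α → a < b →
    ∃ d : Node C, a < d ∧ d < b

/-- A partial function `f` with domain `D` is locally constant when every point of `D` has
a cone around it on which `f` is constant. -/
def LocConstOn (C : M → M → M → Prop) {β : Type*} (D : Set M) (f : M → β) : Prop :=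
  ∀ α ∈ D, ∃ Γ : Set M, IsCone C Γ ∧ α ∈ Γ ∧ ∀ x ∈ Γ ∩ D, f x = f α

/-! ### Definability -/

section Definability

variable (L : FirstOrder.Language.{v, w}) [L.Structure M]

/-- A subset of `M` definable with parameters. -/
def DefinableM (s : Set M) : Prop := Set.Definable₁ (Set.univ : Set M) L s

/-- A subset of the canonical tree is definable when the corresponding set of codes
(a node `inf(β,γ)` being coded by the pair `(β,γ)`) is definable with parameters. -/
def DefinableNodeSet (C : M → M → M → Prop) (S : Set (Node C)) : Prop :=
  Set.Definable (Set.univ : Set M) L {p : Fin 2 → M | node C (p 0) (p 1) ∈ S}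

/-- A partial function `f : M → T(M)` with domain `D` is definable when its graph,
with nodes coded by pairs, is definable with parameters. -/
def DefinablePFunTree (C : M → M → M → Prop) (D : Set M) (f : M → Node C) : Prop :=
  Set.Definable (Set.univ : Set M) L
    {p : Fin 3 → M | p 0 ∈ D ∧ f (p 0) = node C (p 1) (p 2)}

/-- A function `g` defined on a subset `A` of the canonical tree, with values in the
canonical tree, is definable when its graph (on codes) is definable with parameters. -/
def DefinableNodeFun (C : M → M → M → Prop) (A : Set (Node C)) (g : Node C → Node C) :
    Prop :=
  Set.Definable (Set.univ : Set M) L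
    {p : Fin 4 → M | node C (p 0) (p 1) ∈ A ∧ g (node C (p 0) (p 1)) = node C (p 2) (p 3)}

end Definability

/-- `s ⊆ N` is definable by a quantifier-free formula with parameters in the language
containing only the ternary relation interpreted as `R`. -/
def QFCDefinable {N : Type w} (R : N → N → N → Prop) (s : Set N) : Prop :=
  ∃ (k : ℕ) (φ : cLang.BoundedFormula (Fin k) 1) (xs : Fin k → N),
    φ.IsQF ∧ s = {x : N | @BoundedFormula.Realize cLang N (cStructure R) _ _ φ xs (fun _ => x)}

/-- `M` is `C`-minimal (with `C` the interpretation of the relation symbol `c`):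
in every elementarily equivalent structure, every subset definable with parameters is
quantifier-free definable using only the relation `C`. -/
def CMinimal (L : FirstOrder.Language.{v, w}) (M : Type u) [L.Structure M]
    (c : L.Relations 3) : Prop :=
  ∀ (N : Type u) [L.Structure N], (M ≅[L] N) →
    ∀ s : Set N, Set.Definable₁ (Set.univ : Set N) L s →
      QFCDefinable (fun x y z : N => RelMap c ![x, y, z]) s

/-! ### The induced C-relation on an antichain, infima closure -/

/-- The relation `C_A(x,y,z) ↔ inf(y,z) > inf(x,y)` induced on (an antichain of) the
canonical tree. -/
def CInd (C : M → M → M → Prop) (x y z : Node C) : Prop :=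
  ∃ m₁ m₂ : Node C, IsInfN C y z m₁ ∧ IsInfN C x y m₂ ∧ m₂ < m₁

/-- The induced `C`-relation, as a ternary relation on an antichain `A`. -/
def CIndRel (C : M → M → M → Prop) (A : Set (Node C)) : ↥A → ↥A → ↥A → Prop :=
  fun x y z => CInd C x.1 y.1 z.1

/-- The closure `cl_inf(A)` of a subset of the canonical tree under binary infima. -/
inductive InfClosure (C : M → M → M → Prop) (A : Set (Node C)) : Node C → Prop
  | base {a : Node C} : a ∈ A → InfClosure C A a
  | inf {a b m : Node C} : InfClosure C A a → InfClosure C A b → IsInfN C a b m →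
      InfClosure C A m

/-- A cone of the `C`-set `(A, C_A)` induced on an antichain `A` (including `A` itself,
the cone at `-∞`): `Γ_{inf(a,b)}(a) = {x ∈ A : C_A(b,x,a)}`. -/
def ConeInAntichain (C : M → M → M → Prop) (A : Set (Node C)) (S : Set (Node C)) : Prop :=
  S = A ∨ ∃ a ∈ A, ∃ b ∈ A, a ≠ b ∧ S = {x ∈ A | CInd C b x a}

/-! ### Incomparable chains and t-functions -/

/-- A finite set `𝔠` of definable chains of `T` is a set of *incomparable chains* if
(a) elements of distinct chains are incomparable, (b) the antichain
`A = {inf(lp C₀, lp C₁)}` of infima of left endpoints is an antichain on which the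
automorphism group of the induced `C`-set acts transitively, and (c) each `a ∈ A` lies
strictly below elements of exactly `k` chains of `𝔠`. -/
def IsIncompChainSet (C : M → M → M → Prop) (defin : Set (Node C) → Prop)
    (𝔠 : Set (Set (Node C))) : Prop :=
  𝔠.Finite ∧
  (∀ B ∈ 𝔠, IsChain (· ≤ ·) B ∧ defin B) ∧
  (∀ B₁ ∈ 𝔠, ∀ B₂ ∈ 𝔠, B₁ ≠ B₂ → ∀ x ∈ B₁, ∀ y ∈ B₂, ¬ x ≤ y ∧ ¬ y ≤ x) ∧
  ∃ lp : Set (Node C) → WithBot (Node C),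
    (∀ B ∈ 𝔠, IsGLB ((fun a : Node C => (a : WithBot (Node C))) '' B) (lp B)) ∧
    ∀ A : Set (Node C),
      (∀ x : Node C, x ∈ A ↔
        ∃ B₁ ∈ 𝔠, ∃ B₂ ∈ 𝔠, B₁ ≠ B₂ ∧ IsGLB {lp B₁, lp B₂} (x : WithBot (Node C))) →
      IsAntichain (· ≤ ·) A ∧
      (∀ (a : Node C) (ha : a ∈ A) (b : Node C) (hb : b ∈ A), ∃ g : ↥A ≃ ↥A,
        (∀ x y z : ↥A, CIndRel C A x y z ↔ CIndRel C A (g x) (g y) (g z)) ∧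
        g ⟨a, ha⟩ = ⟨b, hb⟩) ∧
      ∃ k : ℕ, ∀ a ∈ A, {B ∈ 𝔠 | ∃ x ∈ B, a < x}.ncard = k

/-- A definable function on a definable antichain `A ⊆ T` is a *t-function* when its
image is an antichain or the union of a finite set of incomparable chains. -/
def IsTFunction (C : M → M → M → Prop) (defin : Set (Node C) → Prop)
    (A : Set (Node C)) (f : Node C → Node C) : Prop :=
  IsAntichain (· ≤ ·) (f '' A) ∨
    ∃ 𝔠 : Set (Set (Node C)), IsIncompChainSet C defin 𝔠 ∧ f '' A = ⋃₀ 𝔠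

/-! ### 1-cells of the canonical tree -/

/-- A 1-cell of `T`: the image, or the set of points strictly between the values of,
two definable t-functions `g < f` on a definable antichain `A ⊆ T`. -/
def IsCellT (C : M → M → M → Prop) (definN : Set (Node C) → Prop)
    (definFun : Set (Node C) → (Node C → Node C) → Prop) (X : Set (Node C)) : Prop :=
  ∃ (A : Set (Node C)) (f g : Node C → Node C),
    definN A ∧ IsAntichain (· ≤ ·) A ∧ (∀ a ∈ A, ¬ IsLeaf C a) ∧
    definFun A f ∧ definFun A g ∧
    IsTFunction C definN A f ∧ IsTFunction C definN A g ∧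
    (∀ a ∈ A, ¬ IsLeaf C (f a)) ∧ (∀ a ∈ A, ¬ IsLeaf C (g a)) ∧
    (∀ a ∈ A, g a < f a) ∧
    (X = f '' A ∨ X = {t : Node C | ∃ a ∈ A, g a < t ∧ t < f a})

/-! ### C-isomorphisms and algebraic closure -/

/-- A function from a subset `S` of `M` to the canonical tree is a `C`-isomorphism on `S`
if it is injective, has antichain image, and transports the relation `C` to the induced
relation `C_A` on the image antichain. -/
def IsCIsoOn (C : M → M → M → Prop) (S : Set M) (f : M → Node C) : Prop :=
  Set.InjOn f S ∧ IsAntichain (· ≤ ·) (f '' S) ∧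
    ∀ x ∈ S, ∀ y ∈ S, ∀ z ∈ S, (C x y z ↔ CInd C (f x) (f y) (f z))

/-- `f` is a local `C`-isomorphism on `D`. -/
def LocalCIsoOn (C : M → M → M → Prop) (D : Set M) (f : M → Node C) : Prop :=
  ∀ α ∈ D, ∃ Γ : Set M, IsCone C Γ ∧ α ∈ Γ ∧ IsCIsoOn C (Γ ∩ D) f

/-- The model-theoretic algebraic closure of `A`: the union of all finite `A`-definable
subsets. -/
def aclSet (L : FirstOrder.Language.{v, w}) (N : Type u) [L.Structure N] (A : Set N) :
    Set N :=
  ⋃₀ {s : Set N | s.Finite ∧ Set.Definable₁ A L s}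

/-! ### Intervals of a chain of the canonical tree -/

/-- An interval of a chain `B ⊆ T(M)`: a nonempty convex subset of `B`, open in the
order topology of `B`, which is not a single point. -/
def IsIntervalIn (C : M → M → M → Prop) (B I : Set (Node C)) : Prop :=
  I ⊆ B ∧ I.Nonempty ∧ (¬ ∃ x, I = {x}) ∧
  (∀ x ∈ I, ∀ y ∈ I, ∀ z ∈ B, x ≤ z → z ≤ y → z ∈ I) ∧
  (∀ x ∈ I,
    ((∀ y ∈ B, ¬ y < x) ∨ ∃ a ∈ B, a < x ∧ ∀ y ∈ B, a < y → y ≤ x → y ∈ I) ∧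
    ((∀ y ∈ B, ¬ x < y) ∨ ∃ b ∈ B, x < b ∧ ∀ y ∈ B, x ≤ y → y < b → y ∈ I))

/-- The family of subsets of `T` defined by a formula `φ(t, y)` (given by its set `Φ` of
codes) at the parameter `α`. -/
def nodeFam (C : M → M → M → Prop) {k : ℕ} (Φ : Set (Fin (2 + k) → M))
    (α : Fin k → M) : Set (Node C) :=
  {x : Node C | ¬ IsLeaf C x ∧ ∃ β γ : M, x = node C β γ ∧ Fin.append ![β, γ] α ∈ Φ}

/-! ### Valued fields -/

/-- `v` is a surjective nontrivial valuation on `K` with value group `Γ`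
(written additively, with `v 0 = ⊤`). -/
structure IsValuationOn (K : Type u) [Field K] (Γ : Type v)
    [AddCommGroup Γ] [LinearOrder Γ] [IsOrderedAddMonoid Γ] (v : K → WithTop Γ) : Prop where
  top_iff : ∀ x : K, v x = ⊤ ↔ x = 0
  map_mul : ∀ x y : K, v (x * y) = v x + v y
  add_min : ∀ x y : K, min (v x) (v y) ≤ v (x + y)
  surj : ∀ g : Γ, ∃ x : K, v x = (g : WithTop Γ)
  nontriv : ∃ x : K, x ≠ 0 ∧ v x ≠ (0 : WithTop Γ)

/-- The canonical `C`-relation of a valued field: `C(x,y,z)` iff `v(y−z) > v(x−z)`. -/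
def vC {K : Type u} [Field K] {Γ : Type v} [AddCommGroup Γ] [LinearOrder Γ] [IsOrderedAddMonoid Γ]
    (v : K → WithTop Γ) : K → K → K → Prop :=
  fun x y z => v (x - z) < v (y - z)

/-- The coset relation `v(x−y) > 0` on the valuation ring, defining the residue field. -/
def resRel {K : Type u} [Field K] {Γ : Type v} [AddCommGroup Γ] [LinearOrder Γ] [IsOrderedAddMonoid Γ]
    (v : K → WithTop Γ) :
    {x : K // (0 : WithTop Γ) ≤ v x} → {x : K // (0 : WithTop Γ) ≤ v x} → Prop :=
  fun a b => (0 : WithTop Γ) < v (a.1 - b.1)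

/-- The residue field `K/v`: the valuation ring modulo the coset relation `v(x−y) > 0`. -/
def ResField {K : Type u} [Field K] {Γ : Type v} [AddCommGroup Γ] [LinearOrder Γ] [IsOrderedAddMonoid Γ]
    (v : K → WithTop Γ) : Type u :=
  Quot (resRel v)

/-- The residue `x/v` of `x ∈ K`: its class in `K/v` when `x` lies in the valuation
ring (and the class of `0` otherwise, as a junk value). -/
noncomputable def resOf {K : Type u} [Field K] {Γ : Type v}
    [AddCommGroup Γ] [LinearOrder Γ] [IsOrderedAddMonoid Γ] {v : K → WithTop Γ}
    (hv : IsValuationOn K Γ v) (x : K) : ResField v := by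
  classical
  exact if hx : (0 : WithTop Γ) ≤ v x then Quot.mk _ ⟨x, hx⟩
    else Quot.mk _ ⟨0, by rw [(hv.top_iff 0).mpr rfl]; exact le_top⟩

/-!
By `C`-minimality, applied to `M` itself, `D` is defined by a quantifier-free formula in `C`
with parameters `z₁, …, z_k`. A point outside a 0-level set `Λ_a` sees all points of `Λ_a`
alike: `C(z, x, y)` holds for all `x, y ∈ Λ_a`. Hence if no `z_i` lies in `Λ_a`, every atomic
formula, and so `D`, is constant on `Λ_a`, and `D` splits no cone at `a`. A node whose `Λ_a`
contains `z_i` lies on the branch of `z_i`, which meets the antichain `A` in at most one node;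
so the split cones have at most `k` bases, each carrying finitely many cones of the family.
-/

theorem Node.le_iff_subset {C : M → M → M → Prop} {a b : Node C} : a ≤ b ↔ b.1 ⊆ a.1 :=
  Iff.rfl

theorem sum_elim_eq_sum_elim_iff {C : M → M → M → Prop} {α : Type*} {a : Node C}
    {σ : α → M} (hσ : ∀ i, σ i ∉ a.1) {x y : M} (hx : x ∈ a.1) (hy : y ∈ a.1)
    (u v : α ⊕ Fin 1) :
    Sum.elim σ (fun _ => x) u = Sum.elim σ (fun _ => x) v ↔
      Sum.elim σ (fun _ => y) u = Sum.elim σ (fun _ => y) v := by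
  rcases u with i | _ <;> rcases v with j | _ <;> simp only [Sum.elim_inl, Sum.elim_inr]
  · exact iff_of_false ((ne_of_mem_of_not_mem hx (hσ i)).symm)
      (ne_of_mem_of_not_mem hy (hσ i)).symm
  · exact iff_of_false (ne_of_mem_of_not_mem hx (hσ j)) (ne_of_mem_of_not_mem hy (hσ j))

theorem cLang.term_eq_var {α : Type*} (t : cLang.Term α) : ∃ i, t = Term.var i := by
  cases t with
  | var i => exact ⟨i, rfl⟩
  | func f _ => exact f.elim

namespace IsCSet

variable {C : M → M → M → Prop}

theorem not_C_self_left (h : IsCSet C) (x z : M) : ¬ C x x z :=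
  fun hx => h.c2 _ _ _ hx hx

theorem C_of_C_of_C (h : IsCSet C) {t u v z : M} (hu : C t u z) (hv : C t v z) : C t u v := by
  rcases h.c3 t z u v (h.c1 _ _ _ hu) with h' | h'
  · rcases h.c3 t z v u (h.c1 _ _ _ hv) with h'' | h''
    · exact absurd (h.c1 _ _ _ h') (h.c2 _ _ _ (h.c1 _ _ _ h''))
    · exact h''
  · exact h.c1 _ _ _ h'

theorem mem_lamSet_self (h : IsCSet C) (α β : M) : β ∈ lamSet C α β :=
  fun hc => h.not_C_self_left β α (h.c1 _ _ _ hc)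

theorem C_of_mem_of_not_mem (h : IsCSet C) {a : Node C} {x y z : M} (hx : x ∈ a.1)
    (hy : y ∈ a.1) (hz : z ∉ a.1) : C z x y := by
  obtain ⟨p, q, hpq⟩ := a.2
  rw [hpq] at hx hy hz
  have hz : C z p q := not_not.mp hz
  exact h.C_of_C_of_C ((h.c3 z p q x hz).resolve_left hx) ((h.c3 z p q y hz).resolve_left hy)

theorem not_C_of_mem_of_not_mem (h : IsCSet C) {a : Node C} {x y z : M} (hx : x ∈ a.1)
    (hy : y ∈ a.1) (hz : z ∉ a.1) : ¬ C x y z :=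
  fun hxyz => h.c2 _ _ _ (h.c1 _ _ _ hxyz) (h.C_of_mem_of_not_mem hx hy hz)

theorem C_left_congr (h : IsCSet C) {a : Node C} {x y z : M} (hx : x ∈ a.1) (hy : y ∈ a.1)
    (hz : z ∉ a.1) (b : M) : C x b z ↔ C y b z :=
  ⟨fun hC => (h.c3 x b z y hC).resolve_right (h.not_C_of_mem_of_not_mem hx hy hz),
    fun hC => (h.c3 y b z x hC).resolve_right (h.not_C_of_mem_of_not_mem hy hx hz)⟩

theorem C_mid_congr (h : IsCSet C) {a : Node C} {x y z : M} (hx : x ∈ a.1) (hy : y ∈ a.1)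
    (hz : z ∉ a.1) (b : M) : C b x z ↔ C b y z :=
  ⟨fun hC => (h.c3 b x z y hC).resolve_left (h.not_C_of_mem_of_not_mem hy hx hz),
    fun hC => (h.c3 b y z x hC).resolve_left (h.not_C_of_mem_of_not_mem hx hy hz)⟩

theorem C_right_congr (h : IsCSet C) {a : Node C} {x y z : M} (hx : x ∈ a.1) (hy : y ∈ a.1)
    (hz : z ∉ a.1) (b : M) : C b z x ↔ C b z y :=
  ⟨fun hC => h.c1 _ _ _ ((h.C_mid_congr hx hy hz b).mp (h.c1 _ _ _ hC)),
    fun hC => h.c1 _ _ _ ((h.C_mid_congr hx hy hz b).mpr (h.c1 _ _ _ hC))⟩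

theorem C_elim_iff (h : IsCSet C) {α : Type*} {a : Node C} {σ : α → M}
    (hσ : ∀ i, σ i ∉ a.1) {x y : M} (hx : x ∈ a.1) (hy : y ∈ a.1) (u v w : α ⊕ Fin 1) :
    C (Sum.elim σ (fun _ => x) u) (Sum.elim σ (fun _ => x) v) (Sum.elim σ (fun _ => x) w) ↔
      C (Sum.elim σ (fun _ => y) u) (Sum.elim σ (fun _ => y) v)
        (Sum.elim σ (fun _ => y) w) := by
  rcases u with i | _ <;> rcases v with j | _ <;> rcases w with l | _ <;>
    simp only [Sum.elim_inl, Sum.elim_inr]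
  · exact h.C_right_congr hx hy (hσ j) (σ i)
  · exact h.C_mid_congr hx hy (hσ l) (σ i)
  · exact iff_of_true (h.c4 _ _ (ne_of_mem_of_not_mem hx (hσ i)).symm)
      (h.c4 _ _ (ne_of_mem_of_not_mem hy (hσ i)).symm)
  · exact h.C_left_congr hx hy (hσ l) (σ j)
  · exact iff_of_false (fun hC => h.not_C_self_left x _ (h.c1 _ _ _ hC))
      (fun hC => h.not_C_self_left y _ (h.c1 _ _ _ hC))
  · exact iff_of_false (h.not_C_self_left x _) (h.not_C_self_left y _)
  · exact iff_of_false (h.not_C_self_left x _) (h.not_C_self_left y _)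

theorem realize_iff_of_mem (h : IsCSet C) {α : Type*}
    {φ : cLang.BoundedFormula α 1} (hφ : φ.IsQF) {a : Node C} {σ : α → M}
    (hσ : ∀ i, σ i ∉ a.1) {x y : M} (hx : x ∈ a.1) (hy : y ∈ a.1) :
    @BoundedFormula.Realize cLang M (cStructure C) _ _ φ σ (fun _ => x) ↔
      @BoundedFormula.Realize cLang M (cStructure C) _ _ φ σ (fun _ => y) := by
  let _ : cLang.Structure M := cStructure C
  induction hφ with
  | falsum => exact Iff.rfl
  | of_isAtomic hat =>
    cases hat with
    | equal t₁ t₂ =>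
      obtain ⟨u, rfl⟩ := cLang.term_eq_var t₁
      obtain ⟨v, rfl⟩ := cLang.term_eq_var t₂
      simpa only [BoundedFormula.realize_bdEqual, Term.realize_var]
        using sum_elim_eq_sum_elim_iff hσ hx hy u v
    | rel R ts =>
      obtain ⟨rfl⟩ := R
      choose e he using fun i => cLang.term_eq_var (ts i)
      show RelMap _ (fun i => (ts i).realize _) ↔ RelMap _ (fun i => (ts i).realize _)
      simp only [he, Term.realize_var]
      exact h.C_elim_iff hσ hx hy (e 0) (e 1) (e 2)
  | imp _ _ ih₁ ih₂ => simp only [BoundedFormula.realize_imp, ih₁, ih₂]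

theorem le_or_le_of_mem (h : IsCSet C) {a b : Node C} {z : M} (ha : z ∈ a.1)
    (hb : z ∈ b.1) : a ≤ b ∨ b ≤ a := by
  simp only [Node.le_iff_subset]
  by_contra! hab
  obtain ⟨⟨w, hwb, hwa⟩, ⟨x, hxa, hxb⟩⟩ :=
    And.imp Set.not_subset.mp Set.not_subset.mp hab
  exact h.c2 _ _ _ (h.c1 _ _ _ (h.C_of_mem_of_not_mem ha hxa hwa))
    (h.c1 _ _ _ (h.C_of_mem_of_not_mem hb hwb hxb))

theorem subsingleton_antichain_inter (h : IsCSet C) {A : Set (Node C)}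
    (hA : IsAntichain (· ≤ ·) A) (z : M) : {a ∈ A | z ∈ a.1}.Subsingleton := by
  rintro a ⟨haA, ha⟩ b ⟨hbA, hb⟩
  rcases h.le_or_le_of_mem ha hb with hab | hba
  exacts [hA.eq haA hbA hab, (hA.eq hbA haA hba).symm]

theorem subset_of_isConeAt (h : IsCSet C) {a : Node C} {s : Set M} (hs : IsConeAt C a s) :
    s ⊆ a.1 := by
  obtain ⟨α, -, rfl⟩ := hs
  exact fun β (hβ : a < node C α β) => hβ.le (h.mem_lamSet_self α β)

theorem finite_setOf_splits (h : IsCSet C) {A : Set (Node C)}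
    (hanti : IsAntichain (· ≤ ·) A) {G : Set (Set M)}
    (hbase : ∀ s ∈ G, ∃ a ∈ A, IsConeAt C a s)
    (hfin : ∀ a ∈ A, {s ∈ G | IsConeAt C a s}.Finite) {Z : Set M} (hZ : Z.Finite)
    {D : Set M}
    (hD : ∀ a : Node C, (∀ z ∈ Z, z ∉ a.1) → ∀ x ∈ a.1, ∀ y ∈ a.1, x ∈ D → y ∈ D) :
    {s ∈ G | (s ∩ D).Nonempty ∧ (s \ D).Nonempty}.Finite := by
  refine (hZ.biUnion fun z _ => (h.subsingleton_antichain_inter hanti z).finite.biUnion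
    fun a ha => hfin a ha.1).subset ?_
  rintro s ⟨hsG, ⟨x, hxs, hxD⟩, ⟨y, hys, hyD⟩⟩
  obtain ⟨a, haA, hs⟩ := hbase s hsG
  obtain ⟨z, hzZ, hza⟩ : ∃ z ∈ Z, z ∈ a.1 := by
    by_contra! hZa
    exact hyD (hD a hZa x (h.subset_of_isConeAt hs hxs) y (h.subset_of_isConeAt hs hys) hxD)
  exact mem_biUnion hzZ (mem_biUnion ⟨haA, hza⟩ ⟨hsG, hs⟩)

end IsCSet

theorem statement8_general {M : Type u} {L : FirstOrder.Language.{v, w}} [L.Structure M]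
    (c : L.Relations 3) (C : M → M → M → Prop)
    (hC : ∀ x y z : M, C x y z ↔ RelMap c ![x, y, z])
    (hdense : IsDenseCSet C) (hmin : CMinimal L M c)
    (A : Set (Node C))
    (hanti : IsAntichain (· ≤ ·) A)
    (G : Set (Set M))
    (hbase : ∀ s ∈ G, ∃ a ∈ A, IsConeAt C a s)
    (N : ℕ)
    (hbound : ∀ a ∈ A, {s ∈ G | IsConeAt C a s}.Finite ∧
      {s ∈ G | IsConeAt C a s}.ncard ≤ N)
    (D : Set M) (hDdef : DefinableM L D) :
    {s ∈ G | (s ∩ D).Nonempty ∧ (s \ D).Nonempty}.Finite := by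
  obtain ⟨k, φ, xs, hφ, hD⟩ := hmin M rfl D hDdef
  have hRC : (fun x y z : M => RelMap c ![x, y, z]) = C :=
    funext₃ fun x y z => propext (hC x y z).symm
  rw [hRC] at hD
  subst hD
  exact hdense.finite_setOf_splits hanti hbase (fun a ha => (hbound a ha).1)
    (Set.finite_range xs) fun a ha x hx y hy =>
      (hdense.realize_iff_of_mem hφ (fun i => ha _ ⟨i, rfl⟩) hx hy).mp

/-- Given an infinite family of cones with bases in an infinite
antichain, boundedly many per basis, every definable set `D ⊆ M` splits only finitely
many of the cones. -/
theorem statement8 {M : Type u} {L : FirstOrder.Language.{v, w}} [L.Structure M]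
    (c : L.Relations 3) (C : M → M → M → Prop)
    (hC : ∀ x y z : M, C x y z ↔ RelMap c ![x, y, z])
    (hdense : IsDenseCSet C) (hmin : CMinimal L M c)
    (hbn : BranchesInfinite C) (hbd : BranchesDense C)
    (A : Set (Node C)) (hAT : ∀ a ∈ A, ¬ IsLeaf C a)
    (hanti : IsAntichain (· ≤ ·) A) (hAinf : A.Infinite)
    (G : Set (Set M)) (hGinf : G.Infinite)
    (hbase : ∀ s ∈ G, ∃ a ∈ A, IsConeAt C a s)
    (N : ℕ) (hN : 0 < N)
    (hbound : ∀ a ∈ A, {s ∈ G | IsConeAt C a s}.Finite ∧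
      {s ∈ G | IsConeAt C a s}.ncard ≤ N)
    (D : Set M) (hDdef : DefinableM L D) :
    {s ∈ G | (s ∩ D).Nonempty ∧ (s \ D).Nonempty}.Finite :=
  statement8_general c C hC hdense hmin A hanti G hbase N hbound D hDdef

end CMinPaper
end

section
/- Let M be a C-set with canonical tree T(M) and let A ⊆ T be an antichain. Define the ternary relation C_A on A by C_A(x,y,z) iff inf(y,z) > inf(x,y) (infima taken in T(M)). Then (A, C_A) is a C-set, and the map sending a pair (a,b) ∈ A² to inf(a,b) induces an order isomorphism between the canonical tree of (A, C_A) and the closure cl_inf(A) of A under binary infima in T(M), under which the leaves of the canonical tree of (A, C_A) correspond to the elements of A. -/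
namespace CMinPaper

open FirstOrder Language Structure Set

universe u v w

variable {M : Type u}

/-!
The canonical tree of a `C`-set is a meet-semilattice in which the nodes below any node form a
chain, because two sets `Λ(α,β)` that meet are nested. In such a semilattice, for an antichain `A`,
`x ⊓ y < y ⊓ z` forces `x ⊓ z = x ⊓ y`; this yields (C1)–(C3) for `C_A(x,y,z) ↔ x ⊓ y < y ⊓ z`,
while (C4) is the antichain condition. The sets `Λ(x,y)` of `(A, C_A)` are the traces
`{z ∈ A | x ⊓ y ≤ z}` of principal filters, and the pairwise infima `A ⊼ A` are already closed
under `⊓`, so `m ↦ {z ∈ A | m ≤ z}` is an order isomorphism from `cl_inf(A) = A ⊼ A` onto the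
canonical tree of `(A, C_A)`, which sends `m` to a singleton exactly when `m ∈ A`.
-/

open scoped SetFamily

section TreeSemilattice

variable {α : Type*} [SemilatticeInf α]

def infCRel (A : Set α) (x y z : A) : Prop := (x : α) ⊓ (y : α) < (y : α) ⊓ (z : α)

lemma le_of_not_lt_of_isChain_Iic (htree : ∀ a : α, IsChain (· ≤ ·) (Iic a)) {a b c : α}
    (hb : b ≤ a) (hc : c ≤ a) (h : ¬ b < c) : c ≤ b :=
  ((htree a).total hb hc).elim (fun hbc => (eq_of_le_of_not_lt hbc h).ge) id

lemma lt_of_not_le_of_isChain_Iic (htree : ∀ a : α, IsChain (· ≤ ·) (Iic a)) {a b c : α}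
    (hb : b ≤ a) (hc : c ≤ a) (h : ¬ c ≤ b) : b < c :=
  lt_of_le_not_ge (((htree a).total hb hc).resolve_right h) h

lemma inf_eq_inf_of_inf_lt_inf (htree : ∀ a : α, IsChain (· ≤ ·) (Iic a)) {x y z : α}
    (h : x ⊓ y < y ⊓ z) : x ⊓ z = x ⊓ y := by
  have hxz : x ⊓ z < y ⊓ z := lt_of_not_le_of_isChain_Iic htree inf_le_right inf_le_right
    fun hle => h.not_ge (le_inf (hle.trans inf_le_left) inf_le_left)
  exact le_antisymm (le_inf inf_le_left (hxz.le.trans inf_le_left))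
    (le_inf inf_le_left (h.le.trans inf_le_right))

lemma isCSet_infCRel (htree : ∀ a : α, IsChain (· ≤ ·) (Iic a)) {A : Set α}
    (hA : IsAntichain (· ≤ ·) A) : IsCSet (infCRel A) where
  c1 x y z (h : (x : α) ⊓ (y : α) < (y : α) ⊓ (z : α)) := by
    show (x : α) ⊓ (z : α) < (z : α) ⊓ (y : α)
    rw [inf_eq_inf_of_inf_lt_inf htree h, inf_comm (z : α)]
    exact h
  c2 x y z (h : (x : α) ⊓ (y : α) < (y : α) ⊓ (z : α))
      (h' : (y : α) ⊓ (x : α) < (x : α) ⊓ (z : α)) := by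
    rw [inf_comm (y : α), inf_eq_inf_of_inf_lt_inf htree h] at h'
    exact lt_irrefl _ h'
  c3 x y z w (h : (x : α) ⊓ (y : α) < (y : α) ⊓ (z : α)) := by
    by_cases hwy : (w : α) ⊓ (y : α) < (y : α) ⊓ (z : α)
    · exact Or.inl hwy
    have hw : (y : α) ⊓ (z : α) ≤ w :=
      (le_of_not_lt_of_isChain_Iic htree inf_le_right inf_le_left hwy).trans inf_le_left
    have hxw : ¬ (y : α) ⊓ (z : α) ≤ (x : α) ⊓ (w : α) :=
      fun hle => h.not_ge (le_inf (hle.trans inf_le_left) inf_le_left)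
    right
    calc (x : α) ⊓ (w : α) < (y : α) ⊓ (z : α) :=
        lt_of_not_le_of_isChain_Iic htree inf_le_right hw hxw
      _ ≤ (w : α) ⊓ (z : α) := le_inf hw inf_le_right
  c4 x y hxy := by
    show (x : α) ⊓ (y : α) < (y : α) ⊓ (y : α)
    rw [inf_idem]
    exact inf_le_right.lt_of_ne fun h =>
      hA y.2 x.2 (Subtype.coe_ne_coe.mpr hxy.symm) (h ▸ inf_le_left)

lemma lamSet_infCRel (htree : ∀ a : α, IsChain (· ≤ ·) (Iic a)) {A : Set α} (x y : A) :
    lamSet (infCRel A) x y = {z : A | (x : α) ⊓ (y : α) ≤ z} := by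
  ext z
  show ¬ (z : α) ⊓ (x : α) < (x : α) ⊓ (y : α) ↔ (x : α) ⊓ (y : α) ≤ z
  refine ⟨fun h => ?_, fun h => (le_inf h inf_le_left).not_gt⟩
  exact (le_of_not_lt_of_isChain_Iic htree inf_le_right inf_le_left h).trans inf_le_left

lemma inf_inf_inf_eq_or (htree : ∀ a : α, IsChain (· ≤ ·) (Iic a)) (a b c : α) :
    a ⊓ b ⊓ (a ⊓ c) = a ⊓ b ∨ a ⊓ b ⊓ (a ⊓ c) = a ⊓ c :=
  ((htree a).total inf_le_left inf_le_left).imp inf_eq_left.mpr inf_eq_right.mpr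

lemma infClosed_infs_self (htree : ∀ a : α, IsChain (· ≤ ·) (Iic a)) (A : Set α) :
    InfClosed (A ⊼ A) := by
  rintro _ ⟨a, ha, b, hb, rfl⟩ _ ⟨c, hc, d, hd, rfl⟩
  -- `a ⊓ b`, `a ⊓ c`, `a ⊓ d` lie below `a`, so the infimum of the four is one of them.
  have h : a ⊓ b ⊓ (c ⊓ d) = a ⊓ b ⊓ (a ⊓ c) ⊓ (a ⊓ d) := by
    rw [inf_inf_inf_comm a b a c, inf_idem]
    ac_rfl
  obtain ⟨x, hx, hbc⟩ : ∃ x ∈ A, a ⊓ b ⊓ (a ⊓ c) = a ⊓ x :=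
    (inf_inf_inf_eq_or htree a b c).elim (fun e => ⟨b, hb, e⟩) fun e => ⟨c, hc, e⟩
  obtain ⟨y, hy, hxd⟩ : ∃ y ∈ A, a ⊓ x ⊓ (a ⊓ d) = a ⊓ y :=
    (inf_inf_inf_eq_or htree a x d).elim (fun e => ⟨x, hx, e⟩) fun e => ⟨d, hd, e⟩
  rw [h, hbc, hxd]
  exact Set.mem_image2_of_mem ha hy

def infsOrderEmbedding (htree : ∀ a : α, IsChain (· ≤ ·) (Iic a)) (A : Set α) :
    ↥(A ⊼ A) ↪o Node (infCRel A) :=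
  OrderEmbedding.ofMapLEIff
    (fun m => ⟨{z : A | (m : α) ≤ z}, by
      obtain ⟨x, hx, y, hy, hm⟩ := Set.mem_infs.mp m.2
      exact ⟨⟨x, hx⟩, ⟨y, hy⟩, by rw [lamSet_infCRel htree, ← hm]⟩⟩)
    (by
      rintro ⟨m, hm⟩ ⟨_, hm'⟩
      obtain ⟨a, ha, b, hb, rfl⟩ := Set.mem_infs.mp hm'
      refine ⟨fun h => ?_, fun h z hz => le_trans h hz⟩
      have h' : ∀ z : A, a ⊓ b ≤ (z : α) → m ≤ z := fun z => @h z
      exact le_inf (h' ⟨a, ha⟩ inf_le_left) (h' ⟨b, hb⟩ inf_le_right))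

lemma infsOrderEmbedding_infs (htree : ∀ a : α, IsChain (· ≤ ·) (Iic a)) {A : Set α} (x y : A) :
    infsOrderEmbedding htree A ⟨(x : α) ⊓ (y : α), Set.mem_image2_of_mem x.2 y.2⟩ =
      node (infCRel A) x y :=
  Subtype.ext (lamSet_infCRel htree x y).symm

lemma surjective_infsOrderEmbedding (htree : ∀ a : α, IsChain (· ≤ ·) (Iic a)) (A : Set α) :
    Function.Surjective (infsOrderEmbedding htree A) := by
  rintro ⟨_, x, y, rfl⟩
  exact ⟨_, infsOrderEmbedding_infs htree x y⟩

lemma isLeaf_infsOrderEmbedding_iff (htree : ∀ a : α, IsChain (· ≤ ·) (Iic a)) {A : Set α}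
    (hA : IsAntichain (· ≤ ·) A) (m : ↥(A ⊼ A)) :
    IsLeaf (infCRel A) (infsOrderEmbedding htree A m) ↔ (m : α) ∈ A := by
  obtain ⟨_, hm⟩ := m
  obtain ⟨a, ha, b, hb, rfl⟩ := Set.mem_infs.mp hm
  constructor
  · rintro ⟨z, hz⟩
    have hza : (⟨a, ha⟩ : A) = z := (Set.ext_iff.mp hz _).mp (show a ⊓ b ≤ a from inf_le_left)
    have hzb : (⟨b, hb⟩ : A) = z := (Set.ext_iff.mp hz _).mp (show a ⊓ b ≤ b from inf_le_right)
    obtain rfl : a = b := congrArg Subtype.val (hza.trans hzb.symm)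
    show a ⊓ a ∈ A
    rwa [inf_idem]
  · intro hm
    refine ⟨⟨_, hm⟩, Set.ext fun z => ⟨fun hz => ?_, fun hz => ?_⟩⟩
    · exact Subtype.ext (hA.eq hm z.2 hz).symm
    · rw [Set.mem_singleton_iff.mp hz]
      exact le_rfl (α := α)

theorem exists_orderIso_node_infCRel (htree : ∀ a : α, IsChain (· ≤ ·) (Iic a)) {A : Set α}
    (hA : IsAntichain (· ≤ ·) A) :
    ∃ e : Node (infCRel A) ≃o ↥(A ⊼ A),
      (∀ x y : A, (e (node (infCRel A) x y) : α) = (x : α) ⊓ (y : α)) ∧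
      ∀ s, IsLeaf (infCRel A) s ↔ (e s : α) ∈ A := by
  set e := OrderIso.ofSurjective _ (surjective_infsOrderEmbedding htree A)
  refine ⟨e.symm, fun x y => ?_, fun s => ?_⟩
  · rw [← infsOrderEmbedding_infs htree x y]
    exact congrArg Subtype.val (e.symm_apply_apply _)
  · obtain ⟨m, rfl⟩ := e.surjective s
    rw [e.symm_apply_apply]
    exact isLeaf_infsOrderEmbedding_iff htree hA m

end TreeSemilattice

section CanonicalTree

variable {C : M → M → M → Prop}

lemma IsCSet.not_rel_self_left (hC : IsCSet C) (x y : M) : ¬ C x x y :=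
  fun h => hC.c2 x x y h h

lemma IsCSet.mem_lamSet_left (hC : IsCSet C) (α β : M) : α ∈ lamSet C α β :=
  hC.not_rel_self_left α β

lemma IsCSet.mem_lamSet_right (hC : IsCSet C) (α β : M) : β ∈ lamSet C α β :=
  fun h => hC.not_rel_self_left β α (hC.c1 _ _ _ h)

lemma IsCSet.rel_of_mem_lamSet (hC : IsCSet C) {α β γ δ x : M}
    (hγ : γ ∈ lamSet C α β) (hδ : δ ∈ lamSet C α β) (hx : C x α β) : C x γ δ := by
  have hxβγ : C x β γ := hC.c1 _ _ _ ((hC.c3 x α β γ hx).resolve_left hγ)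
  have hxβδ : C x β δ := hC.c1 _ _ _ ((hC.c3 x α β δ hx).resolve_left hδ)
  by_contra hxγδ
  have hδβγ : C δ β γ := (hC.c3 x β γ δ hxβγ).resolve_right fun h => hxγδ (hC.c1 _ _ _ h)
  have hγβδ : C γ β δ := (hC.c3 x β δ γ hxβδ).resolve_right hxγδ
  exact hC.c2 γ δ β (hC.c1 _ _ _ hγβδ) (hC.c1 _ _ _ hδβγ)

lemma IsCSet.lamSet_subset (hC : IsCSet C) {α β γ δ : M}
    (hγ : γ ∈ lamSet C α β) (hδ : δ ∈ lamSet C α β) : lamSet C γ δ ⊆ lamSet C α β :=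
  fun _ hx hcon => hx (hC.rel_of_mem_lamSet hγ hδ hcon)

lemma IsCSet.lamSet_subset_or_subset (hC : IsCSet C) {α β γ δ x : M}
    (h₁ : x ∈ lamSet C α β) (h₂ : x ∈ lamSet C γ δ) :
    lamSet C α β ⊆ lamSet C γ δ ∨ lamSet C γ δ ⊆ lamSet C α β := by
  refine or_iff_not_imp_left.mpr fun hsub z hz => ?_
  obtain ⟨y, hy₁, hy₂⟩ := Set.not_subset.mp hsub
  by_contra hzαβ
  exact hC.c2 y z x (hC.c1 _ _ _ (hC.rel_of_mem_lamSet h₂ hz (not_not.mp hy₂)))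
    (hC.c1 _ _ _ (hC.rel_of_mem_lamSet h₁ hy₁ (not_not.mp hzαβ)))

lemma Node.nonempty (hC : IsCSet C) (a : Node C) : a.1.Nonempty := by
  obtain ⟨_, α, β, rfl⟩ := a
  exact ⟨α, hC.mem_lamSet_left α β⟩

lemma Node.le_total_of_mem (hC : IsCSet C) {a b : Node C} {x : M} (ha : x ∈ a.1)
    (hb : x ∈ b.1) : a ≤ b ∨ b ≤ a := by
  obtain ⟨_, α, β, rfl⟩ := a
  obtain ⟨_, γ, δ, rfl⟩ := b
  exact (hC.lamSet_subset_or_subset ha hb).symm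

lemma Node.le_node (hC : IsCSet C) {a : Node C} {α γ : M} (hα : α ∈ a.1) (hγ : γ ∈ a.1) :
    a ≤ node C α γ := by
  obtain ⟨_, α', β', rfl⟩ := a
  exact hC.lamSet_subset hα hγ

lemma Node.isChain_Iic (hC : IsCSet C) (a : Node C) : IsChain (· ≤ ·) (Iic a) := by
  obtain ⟨x, hx⟩ := a.nonempty hC
  exact fun b hb c hc _ => Node.le_total_of_mem hC (hb hx) (hc hx)

lemma isInfN_of_le {a b : Node C} (h : a ≤ b) : IsInfN C a b a :=
  ⟨le_rfl, h, fun _ hd _ => hd⟩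

lemma isInfN_of_ge {a b : Node C} (h : b ≤ a) : IsInfN C a b b :=
  ⟨h, le_rfl, fun _ _ hd => hd⟩

lemma exists_isInfN (hC : IsCSet C) (a b : Node C) : ∃ m, IsInfN C a b m := by
  obtain ⟨α, hα⟩ := a.nonempty hC
  obtain ⟨γ, hγ⟩ := b.nonempty hC
  rcases Node.le_total_of_mem hC (b := node C α γ) hα (hC.mem_lamSet_left α γ) with hau | hua
  · rcases Node.le_total_of_mem hC (hau (hC.mem_lamSet_right α γ)) hγ with hab | hba
    · exact ⟨a, isInfN_of_le hab⟩
    · exact ⟨b, isInfN_of_ge hba⟩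
  · rcases Node.le_total_of_mem hC (b := node C α γ) hγ (hC.mem_lamSet_right α γ) with hbu | hub
    · exact ⟨b, isInfN_of_ge (hbu.trans hua)⟩
    · exact ⟨node C α γ, hua, hub, fun d hda hdb => Node.le_node hC (hda hα) (hdb hγ)⟩

@[reducible]
noncomputable def Node.semilatticeInf (hC : IsCSet C) : SemilatticeInf (Node C) where
  inf a b := (exists_isInfN hC a b).choose
  inf_le_left a b := (exists_isInfN hC a b).choose_spec.1
  inf_le_right a b := (exists_isInfN hC a b).choose_spec.2.1
  le_inf a b c hb hc := (exists_isInfN hC b c).choose_spec.2.2 a hb hc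

lemma isInfN_iff_eq_inf (hC : IsCSet C) {a b m : Node C} :
    letI := Node.semilatticeInf hC
    IsInfN C a b m ↔ m = a ⊓ b := by
  let := Node.semilatticeInf hC
  refine ⟨fun h => le_antisymm (le_inf h.1 h.2.1) (h.2.2 _ inf_le_left inf_le_right), ?_⟩
  rintro rfl
  exact ⟨inf_le_left, inf_le_right, fun _ => le_inf⟩

lemma cIndRel_eq_infCRel (hC : IsCSet C) (A : Set (Node C)) :
    letI := Node.semilatticeInf hC
    CIndRel C A = infCRel A := by
  let := Node.semilatticeInf hC
  ext x y z
  simp only [CIndRel, CInd, infCRel, isInfN_iff_eq_inf hC, exists_and_left, exists_eq_left]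

lemma infClosure_iff_mem_infs (hC : IsCSet C) {A : Set (Node C)} {m : Node C} :
    letI := Node.semilatticeInf hC
    InfClosure C A m ↔ m ∈ A ⊼ A := by
  let := Node.semilatticeInf hC
  refine ⟨fun h => ?_, ?_⟩
  · induction h with
    | base ha => exact ⟨_, ha, _, ha, inf_idem _⟩
    | inf _ _ hm iha ihb =>
      rw [(isInfN_iff_eq_inf hC).mp hm]
      exact infClosed_infs_self (Node.isChain_Iic hC) A iha ihb
  · rintro ⟨a, ha, b, hb, rfl⟩
    exact .inf (.base ha) (.base hb) ((isInfN_iff_eq_inf hC).mpr rfl)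

end CanonicalTree

theorem statement16_general {M : Type u} (C : M → M → M → Prop) (hC : IsCSet C)
    (A : Set (Node C))
    (hanti : IsAntichain (· ≤ ·) A) :
    IsCSet (CIndRel C A) ∧
    ∃ e : Node (CIndRel C A) ≃o {m : Node C // InfClosure C A m},
      (∀ a b : ↥A, IsInfN C a.1 b.1 (e (node (CIndRel C A) a b)).1) ∧
      ∀ x : Node (CIndRel C A), IsLeaf (CIndRel C A) x ↔ ((e x).1 ∈ A) := by
  let := Node.semilatticeInf hC
  have htree := Node.isChain_Iic hC
  have hcl : InfClosure C A = (· ∈ A ⊼ A) := funext fun _ => propext (infClosure_iff_mem_infs hC)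
  rw [cIndRel_eq_infCRel hC, hcl]
  obtain ⟨e, he_node, he_leaf⟩ := exists_orderIso_node_infCRel htree hanti
  exact ⟨isCSet_infCRel htree hanti, e, fun a b => (isInfN_iff_eq_inf hC).mpr (he_node a b),
    he_leaf⟩

/-- The relation `C_A` induced on an antichain `A` of the canonical
tree of a `C`-set is a `C`-set relation, and the canonical tree of `(A, C_A)` is order
isomorphic to `cl_inf(A)` via the map induced by `(a,b) ↦ inf(a,b)`, leaves
corresponding to elements of `A`. -/
theorem statement16 {M : Type u} (C : M → M → M → Prop) (hC : IsCSet C)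
    (A : Set (Node C)) (hAT : ∀ a ∈ A, ¬ IsLeaf C a)
    (hanti : IsAntichain (· ≤ ·) A) :
    IsCSet (CIndRel C A) ∧
    ∃ e : Node (CIndRel C A) ≃o {m : Node C // InfClosure C A m},
      (∀ a b : ↥A, IsInfN C a.1 b.1 (e (node (CIndRel C A) a b)).1) ∧
      ∀ x : Node (CIndRel C A), IsLeaf (CIndRel C A) x ↔ ((e x).1 ∈ A) :=
  statement16_general C hC A hanti

end CMinPaper
end

section
/- Let M be a dense C-minimal C-structure and let S ⊆ M be a definable set. Then there is no α ∈ M such that for infinitely many nodes a ∈ Br(α) one has both Λ_a(α) ∩ S ≠ ∅ and Λ_a(α) ∩ (M ∖ S) ≠ ∅. -/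
/-! By `C`-minimality, `S` is defined by a quantifier-free `C`-formula with finitely many
parameters `e`, so only finitely many nodes of `Br(α)` are of the form `inf(α, e)`. At any other
node `a`, the transposition of two points of `Λ_a(α)` fixes the parameters and preserves `C` on
them, so the two points satisfy the same quantifier-free formulas over the parameters: `Λ_a(α)`
lies inside `S` or inside its complement. -/

namespace CMinPaper

open FirstOrder Language Structure Set

universe u v w

variable {M : Type u}

lemma swap_apply_of_lamSet_ne [DecidableEq M] {C : M → M → M → Prop} {α x x' e : M}
    (hE : lamSet C α x = lamSet C α x') (he : lamSet C α e ≠ lamSet C α x) :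
    Equiv.swap x x' e = e :=
  Equiv.swap_apply_of_ne_of_ne (fun h => he (h ▸ rfl)) (fun h => he (h ▸ hE.symm))

namespace IsCSet

variable {C : M → M → M → Prop}

lemma not_rel_self_left_s19 (hC : IsCSet C) (x y : M) : ¬ C x x y := fun h => hC.c2 x x y h h

lemma not_rel_self_right (hC : IsCSet C) (x y : M) : ¬ C x y x :=
  fun h => hC.not_rel_self_left_s19 x y (hC.c1 x y x h)

lemma lamSet_comm (hC : IsCSet C) (x y : M) : lamSet C x y = lamSet C y x := by
  ext w
  exact ⟨fun h hc => h (hC.c1 _ _ _ hc), fun h hc => h (hC.c1 _ _ _ hc)⟩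

lemma lamSet_subset_of_not_rel (hC : IsCSet C) {x γ δ : M} (h : ¬ C x γ δ) :
    lamSet C x δ ⊆ lamSet C γ δ :=
  fun w hw hwc => (hC.c3 w γ δ x hwc).elim h hw

lemma lamSet_subset_iff (hC : IsCSet C) {x γ δ : M} :
    lamSet C x δ ⊆ lamSet C γ δ ↔ ¬ C x γ δ :=
  ⟨fun h => h (hC.not_rel_self_left_s19 x δ), hC.lamSet_subset_of_not_rel⟩

lemma lamSet_eq_of_rel_outside (hC : IsCSet C) {α x δ : M} (h : C δ α x) :
    lamSet C x δ = lamSet C α δ := by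
  ext w
  constructor
  · intro hw hwc
    rcases hC.c3 w α δ x hwc with h1 | h2
    · exact hC.c2 x δ α (hC.c1 _ _ _ h1) (hC.c1 _ _ _ h)
    · exact hw h2
  · intro hw hwc
    rcases hC.c3 w x δ α hwc with h1 | h2
    · exact hC.c2 α δ x (hC.c1 _ _ _ h1) h
    · exact hw h2

lemma lamSet_eq_of_rel_inside (hC : IsCSet C) {α x δ : M} (h : C x α δ) :
    lamSet C x δ = lamSet C α x := by
  ext w
  constructor
  · intro hw hwc
    rcases hC.c3 w α x δ hwc with h1 | h2
    · exact hC.c2 x δ α (hC.c1 _ _ _ h) (hC.c1 _ _ _ h1)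
    · exact hw (hC.c1 _ _ _ h2)
  · intro hw hwc
    rcases hC.c3 w δ x α (hC.c1 _ _ _ hwc) with h1 | h2
    · exact hC.c2 x α δ h (hC.c1 _ _ _ h1)
    · exact hw h2

lemma lamSet_eq_of_not_rel_of_not_rel (hC : IsCSet C) {α x δ : M} (h₁ : ¬ C x α δ)
    (h₂ : ¬ C δ α x) :
    lamSet C α δ = lamSet C α x := by
  ext w
  constructor
  · intro hw hwc
    rcases hC.c3 w x α δ (hC.c1 _ _ _ hwc) with h | h
    · exact h₂ (hC.c1 _ _ _ h)
    · exact hw (hC.c1 _ _ _ h)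
  · intro hw hwc
    rcases hC.c3 w δ α x (hC.c1 _ _ _ hwc) with h | h
    · exact h₁ (hC.c1 _ _ _ h)
    · exact hw (hC.c1 _ _ _ h)

lemma lamSet_subset_of_mem_of_mem (hC : IsCSet C) {α x γ δ : M} (hα : α ∈ lamSet C γ δ)
    (hx : x ∈ lamSet C γ δ) : lamSet C α x ⊆ lamSet C γ δ := by
  by_cases h : C α δ x
  · calc lamSet C α x = lamSet C x α := hC.lamSet_comm α x
      _ = lamSet C δ α := hC.lamSet_eq_of_rel_outside h
      _ = lamSet C α δ := hC.lamSet_comm δ α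
      _ ⊆ lamSet C γ δ := hC.lamSet_subset_of_not_rel hα
  · calc lamSet C α x ⊆ lamSet C δ x := hC.lamSet_subset_of_not_rel h
      _ = lamSet C x δ := hC.lamSet_comm δ x
      _ ⊆ lamSet C γ δ := hC.lamSet_subset_of_not_rel hx

section SameBall

variable {α x x' : M}

/-- A point `δ` with `Λ(α,δ) ≠ Λ(α,x)` lies either outside the ball `Λ(α,x)` or in the cone
of `α` inside it; from there `x` and `x'` look alike. -/
lemma lamSet_congr_of_ne (hC : IsCSet C) (hE : lamSet C α x = lamSet C α x')
    {δ : M} (hδ : lamSet C α δ ≠ lamSet C α x) :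
    lamSet C x δ = lamSet C x' δ := by
  have hrel : ∀ w, C w α x ↔ C w α x' := fun w => not_iff_not.mp (Set.ext_iff.mp hE w)
  by_cases hout : C δ α x
  · rw [hC.lamSet_eq_of_rel_outside hout, hC.lamSet_eq_of_rel_outside ((hrel δ).mp hout)]
  · have hin : C x α δ := by_contra fun h => hδ (hC.lamSet_eq_of_not_rel_of_not_rel h hout)
    have hin' : C x' α δ := by_contra fun h => hδ
      ((hC.lamSet_eq_of_not_rel_of_not_rel h (mt (hrel δ).mpr hout)).trans hE.symm)
    rw [hC.lamSet_eq_of_rel_inside hin, hC.lamSet_eq_of_rel_inside hin', hE]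

lemma rel_congr_of_ne (hC : IsCSet C) (hE : lamSet C α x = lamSet C α x') {e f : M}
    (hf : lamSet C α f ≠ lamSet C α x) :
    (C x e f ↔ C x' e f) ∧ (C e x f ↔ C e x' f) ∧ (C e f x ↔ C e f x') := by
  have hxf := hC.lamSet_congr_of_ne hE hf
  have hmid : C e x f ↔ C e x' f := not_iff_not.mp (Set.ext_iff.mp hxf e)
  refine ⟨?_, hmid, ?_⟩
  · rw [← not_iff_not, ← hC.lamSet_subset_iff, ← hC.lamSet_subset_iff, hxf]
  · exact ⟨fun h => hC.c1 _ _ _ (hmid.mp (hC.c1 _ _ _ h)),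
      fun h => hC.c1 _ _ _ (hmid.mpr (hC.c1 _ _ _ h))⟩

lemma rel_swap_iff [DecidableEq M] (hC : IsCSet C) (hE : lamSet C α x = lamSet C α x')
    {a b c : M} (ha : a = x ∨ lamSet C α a ≠ lamSet C α x)
    (hb : b = x ∨ lamSet C α b ≠ lamSet C α x)
    (hc : c = x ∨ lamSet C α c ≠ lamSet C α x) :
    C (Equiv.swap x x' a) (Equiv.swap x x' b) (Equiv.swap x x' c) ↔ C a b c := by
  have hfix : ∀ e, lamSet C α e ≠ lamSet C α x → Equiv.swap x x' e = e :=
    fun _ he => swap_apply_of_lamSet_ne hE he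
  rcases ha with rfl | ha
  · rcases hb with rfl | hb
    · simp only [Equiv.swap_apply_left, hC.not_rel_self_left_s19]
    · rcases hc with rfl | hc
      · simp only [Equiv.swap_apply_left, hC.not_rel_self_right]
      · rw [Equiv.swap_apply_left, hfix _ hb, hfix _ hc]
        exact (hC.rel_congr_of_ne hE hc).1.symm
  · rw [hfix _ ha]
    rcases hb with rfl | hb
    · rcases hc with rfl | hc
      · rw [Equiv.swap_apply_left]
        exact iff_of_true (hC.c4 _ _ fun h => ha (h ▸ hE.symm))
          (hC.c4 _ _ fun h => ha (h ▸ rfl))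
      · rw [Equiv.swap_apply_left, hfix _ hc]
        exact (hC.rel_congr_of_ne hE hc).2.1.symm
    · rw [hfix _ hb]
      rcases hc with rfl | hc
      · rw [Equiv.swap_apply_left]
        exact (hC.rel_congr_of_ne hE hb).2.2.symm
      · rw [hfix _ hc]

end SameBall

lemma lamSet_eq_of_mem_lamMinus (hC : IsCSet C) {α x : M} {a : Node C} (ha : a < leafN C α)
    (hx : x ∈ lamMinus C a α) : lamSet C α x = a.1 := by
  obtain ⟨γ, δ, hγδ⟩ := a.2
  have hα : α ∈ a.1 := ha.le (hC.not_rel_self_right α α)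
  have hx' : x ∈ a.1 := hx.1 (hC.not_rel_self_right x x)
  have hle : a ≤ node C α x := by
    change lamSet C α x ⊆ a.1
    rw [hγδ] at hα hx' ⊢
    exact hC.lamSet_subset_of_mem_of_mem hα hx'
  exact congrArg Subtype.val ((lt_or_eq_of_le hle).resolve_left hx.2).symm

end IsCSet

lemma cLang_term_eq_var {β : Type w} (t : cLang.Term β) : ∃ b, t = Term.var b := by
  cases t with
  | var b => exact ⟨b, rfl⟩
  | func f _ => exact f.elim

lemma realize_comp_iff_of_injOn {N : Type w} {R : N → N → N → Prop} {D : Set N} {g : N → N}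
    (hinj : Set.InjOn g D)
    (hR : ∀ a ∈ D, ∀ b ∈ D, ∀ c ∈ D, R (g a) (g b) (g c) ↔ R a b c)
    {β : Type*} {n : ℕ} {φ : cLang.BoundedFormula β n} (hφ : φ.IsQF) {v : β → N}
    {xs : Fin n → N} (hv : ∀ i, v i ∈ D) (hxs : ∀ i, xs i ∈ D) :
    @BoundedFormula.Realize cLang N (cStructure R) _ _ φ (g ∘ v) (g ∘ xs) ↔
      @BoundedFormula.Realize cLang N (cStructure R) _ _ φ v xs := by
  let _ : cLang.Structure N := cStructure R
  have hterm : ∀ t : cLang.Term (β ⊕ Fin n), t.realize (Sum.elim (g ∘ v) (g ∘ xs)) =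
      g (t.realize (Sum.elim v xs)) ∧ t.realize (Sum.elim v xs) ∈ D := by
    intro t
    obtain ⟨b | i, rfl⟩ := cLang_term_eq_var t
    exacts [⟨rfl, hv b⟩, ⟨rfl, hxs i⟩]
  induction hφ with
  | falsum => exact Iff.rfl
  | of_isAtomic h =>
    cases h with
    | equal t₁ t₂ =>
      simp only [BoundedFormula.realize_bdEqual, (hterm t₁).1, (hterm t₂).1]
      exact hinj.eq_iff (hterm t₁).2 (hterm t₂).2
    | rel r ts =>
      rw [BoundedFormula.realize_rel, BoundedFormula.realize_rel]
      obtain ⟨h⟩ := r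
      subst h
      change R _ _ _ ↔ R _ _ _
      simp only [(hterm _).1]
      exact hR _ (hterm _).2 _ (hterm _).2 _ (hterm _).2
  | imp _ _ ih₁ ih₂ => exact imp_congr ih₁ ih₂

lemma IsCSet.realize_iff_of_lamSet_eq {C : M → M → M → Prop} (hC : IsCSet C) {α x x' : M}
    (hE : lamSet C α x = lamSet C α x') {β : Type w} {φ : cLang.BoundedFormula β 1}
    (hφ : φ.IsQF) {v : β → M} (hv : ∀ i, lamSet C α (v i) ≠ lamSet C α x) :
    @BoundedFormula.Realize cLang M (cStructure C) _ _ φ v (fun _ => x) ↔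
      @BoundedFormula.Realize cLang M (cStructure C) _ _ φ v (fun _ => x') := by
  classical
  have hswap := realize_comp_iff_of_injOn (Equiv.swap x x').injective.injOn
    (fun a ha b hb c hc => hC.rel_swap_iff hE ha hb hc) hφ (v := v) (xs := fun _ => x)
    (D := {y | y = x ∨ lamSet C α y ≠ lamSet C α x}) (fun i => Or.inr (hv i))
    (fun _ => Or.inl rfl)
  have hv_fixed : Equiv.swap x x' ∘ v = v := funext fun i => swap_apply_of_lamSet_ne hE (hv i)
  rw [hv_fixed, Function.comp_def, Equiv.swap_apply_left] at hswap
  exact hswap.symm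

/-- For a definable `S ⊆ M` there is no point `α` such that
infinitely many nodes `a` of its branch satisfy that `Λ_a(α)` meets both `S` and its
complement. -/
theorem statement19 {M : Type u} {L : FirstOrder.Language.{v, w}} [L.Structure M]
    (c : L.Relations 3) (C : M → M → M → Prop)
    (hC : ∀ x y z : M, C x y z ↔ RelMap c ![x, y, z])
    (hdense : IsDenseCSet C) (hmin : CMinimal L M c)
    (S : Set M) (hS : DefinableM L S) :
    ¬ ∃ α : M, {a : Node C | a < leafN C α ∧ (lamMinus C a α ∩ S).Nonempty ∧
      (lamMinus C a α ∩ (Set.univ \ S)).Nonempty}.Infinite := by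
  rintro ⟨α, hinf⟩
  have hCS : IsCSet C := hdense.toIsCSet
  have hCeq : C = fun x y z : M => RelMap c ![x, y, z] := funext₃ fun x y z => propext (hC x y z)
  obtain ⟨k, φ, xs, hφ, rfl⟩ : QFCDefinable C S := hCeq ▸ hmin M rfl S hS
  obtain ⟨a, ⟨haα, ⟨x, hx, hxS⟩, ⟨x', hx', hx'S⟩⟩, ha_params⟩ :=
    (hinf.sdiff (Set.finite_range fun i => node C α (xs i))).nonempty
  have hxa := hCS.lamSet_eq_of_mem_lamMinus haα hx
  have hparams : ∀ i, lamSet C α (xs i) ≠ lamSet C α x := fun i h =>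
    ha_params ⟨i, Subtype.ext (h.trans hxa)⟩
  exact hx'S.2 ((hCS.realize_iff_of_lamSet_eq
    (hxa.trans (hCS.lamSet_eq_of_mem_lamMinus haα hx').symm) hφ hparams).mp hxS)

end CMinPaper
end
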